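/- Let Λ be a countable group acting on a countable set I. If the action Λ ↷ I admits an invariant mean, then the induced action of Λ on the set J of all nonempty finite subsets of I admits an invariant mean; conversely, if Λ ↷ J admits an invariant mean, then Λ ↷ I admits an invariant mean. -/

import Mathlib

structure InvMean {Λ X : Type*} (act : Λ → X → X) where
  m : Set X → ℝ
  nonneg : ∀ A : Set X, 0 ≤ m A
  total : m Set.univ = 1
  additive : ∀ A B : Set X, Disjoint A B → m (A ∪ B) = m A + m B
  invariant : ∀ (g : Λ) (A : Set X), m (act g '' A) = m A

/-!
An invariant mean on `I` pushes forward along the equivariant map `i ↦ {i}`. Conversely, an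
invariant mean `n` on nonempty finite subsets yields `A ↦ ∫ |A ∩ F| / |F| dn(F)`, which inherits
finite additivity and invariance from the integrand. Since `n` is only finitely additive, this
integral is taken as a limit along a free ultrafilter of the sums `discreteIntegral`, which are
additive up to `1 / k`.
-/

open Filter Topology Pointwise

namespace InvMean

variable {Λ X : Type*} {act : Λ → X → X} (μ : InvMean act)

lemma m_empty : μ.m ∅ = 0 := by
  simpa using μ.additive ∅ ∅ (Set.empty_disjoint ∅)

lemma m_mono {A B : Set X} (h : A ⊆ B) : μ.m A ≤ μ.m B := by
  rw [← Set.union_sdiff_cancel h, μ.additive _ _ Set.disjoint_sdiff_right]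
  linarith [μ.nonneg (B \ A)]

lemma m_le_one (A : Set X) : μ.m A ≤ 1 :=
  μ.total ▸ μ.m_mono (Set.subset_univ A)

lemma m_inter_setOf_lt (E : Set X) (u : X → ℕ) (M : ℕ) :
    μ.m (E ∩ {x | u x < M}) = ∑ j ∈ Finset.range M, μ.m (E ∩ {x | u x = j}) := by
  induction M with
  | zero => simp [μ.m_empty]
  | succ M ih =>
    rw [Finset.sum_range_succ, ← ih, ← μ.additive, ← Set.inter_union_distrib_left]
    · congr 2; ext x; simp only [Set.mem_ofPred_eq, Set.mem_union]; omega
    · exact Set.disjoint_left.2 fun x hx hx' => by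
        simp only [Set.mem_inter_iff, Set.mem_ofPred_eq] at hx hx'; omega

/-- For `u ≤ M` this is the integral of `u` against `μ`, in layer-cake form. -/
noncomputable def layerSum (M : ℕ) (u : X → ℕ) : ℝ :=
  ∑ j ∈ Finset.range M, μ.m {x | j < u x}

variable {μ} {M : ℕ} {u v : X → ℕ}

lemma layerSum_nonneg : 0 ≤ μ.layerSum M u :=
  Finset.sum_nonneg fun _ _ => μ.nonneg _

lemma layerSum_le : μ.layerSum M u ≤ M := by
  calc μ.layerSum M u ≤ ∑ _j ∈ Finset.range M, (1 : ℝ) :=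
        Finset.sum_le_sum fun _ _ => μ.m_le_one _
    _ = M := by simp

lemma layerSum_mono (h : ∀ x, u x ≤ v x) : μ.layerSum M u ≤ μ.layerSum M v :=
  Finset.sum_le_sum fun j _ => μ.m_mono fun x (hx : j < u x) => hx.trans_le (h x)

lemma layerSum_const_self : μ.layerSum M (fun _ => M) = M := by
  rw [layerSum, Finset.sum_congr rfl fun j hj => show μ.m {x : X | j < M} = 1 by
    rw [Set.eq_univ_of_forall (s := {x : X | j < M}) fun _ => Finset.mem_range.1 hj, μ.total]]
  simp

lemma layerSum_add_indicator (E : Set X) :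
    μ.layerSum M (fun x => u x + E.indicator 1 x) = μ.layerSum M u + μ.m (E ∩ {x | u x < M}) := by
  rw [m_inter_setOf_lt, layerSum, layerSum, ← Finset.sum_add_distrib]
  refine Finset.sum_congr rfl fun j _ => ?_
  rw [← μ.additive]
  · congr 1
    ext x
    by_cases hx : x ∈ E <;> simp [hx]; omega
  · exact Set.disjoint_left.2 fun x hx hx' => by
      simp only [Set.mem_inter_iff, Set.mem_ofPred_eq] at hx hx'; omega

lemma layerSum_add (h : ∀ x, u x + v x ≤ M) :
    μ.layerSum M (fun x => u x + v x) = μ.layerSum M u + μ.layerSum M v := by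
  -- add `v` to `u` one layer `{x | i < v x}` at a time
  have truncated : ∀ i, μ.layerSum M (fun x => u x + min (v x) i) =
      μ.layerSum M u + ∑ j ∈ Finset.range i, μ.m {x | j < v x} := by
    intro i
    induction i with
    | zero => simp
    | succ i ih =>
      have hsucc : (fun x => u x + min (v x) (i + 1)) =
          fun x => (u x + min (v x) i) + {x | i < v x}.indicator 1 x := by
        ext x
        by_cases hx : i < v x <;> simp [hx] <;> omega
      have hset : {x | i < v x} ∩ {x | u x + min (v x) i < M} = {x | i < v x} := by
        ext x; simp only [Set.mem_inter_iff, Set.mem_ofPred_eq]; have := h x; omega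
      rw [hsucc, layerSum_add_indicator, ih, hset, Finset.sum_range_succ, add_assoc]
  have := truncated M
  simp only [fun x => min_eq_left ((Nat.le_add_left _ _).trans (h x))] at this
  exact this

/-- The integral of `⌊k f⌋₊ / k`, a lower approximation of `∫ f dμ` with mesh `1 / k`. -/
noncomputable def discreteIntegral (μ : InvMean act) (k : ℕ) (f : X → ℝ) : ℝ :=
  μ.layerSum k (fun x => ⌊k * f x⌋₊) / k

variable {k : ℕ} {f g : X → ℝ}

lemma discreteIntegral_nonneg : 0 ≤ μ.discreteIntegral k f :=
  div_nonneg layerSum_nonneg k.cast_nonneg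

lemma discreteIntegral_le_one : μ.discreteIntegral k f ≤ 1 :=
  div_le_one_of_le₀ layerSum_le k.cast_nonneg

lemma discreteIntegral_one (hk : k ≠ 0) : μ.discreteIntegral k (fun _ => 1) = 1 := by
  simp [discreteIntegral, layerSum_const_self, hk]

lemma discreteIntegral_comp (σ : X → X) (hσ : ∀ S, μ.m (σ ⁻¹' S) = μ.m S) :
    μ.discreteIntegral k (fun x => f (σ x)) = μ.discreteIntegral k f := by
  simp only [discreteIntegral, layerSum]
  congr 1
  exact Finset.sum_congr rfl fun j _ => hσ {x | j < ⌊k * f x⌋₊}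

lemma discreteIntegral_add_sub_mem_Icc (hf : ∀ x, 0 ≤ f x) (hg : ∀ x, 0 ≤ g x)
    (hfg : ∀ x, f x + g x ≤ 1) :
    μ.discreteIntegral k (fun x => f x + g x) - (μ.discreteIntegral k f + μ.discreteIntegral k g)
      ∈ Set.Icc 0 (1 / k : ℝ) := by
  set u : X → ℕ := fun x => ⌊k * f x⌋₊
  set v : X → ℕ := fun x => ⌊k * g x⌋₊
  set w : X → ℕ := fun x => ⌊k * (f x + g x)⌋₊
  have hkf : ∀ x, 0 ≤ k * f x := fun x => mul_nonneg k.cast_nonneg (hf x)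
  have hkg : ∀ x, 0 ≤ k * g x := fun x => mul_nonneg k.cast_nonneg (hg x)
  have huvw : ∀ x, u x + v x ≤ w x := fun x => Nat.le_floor <| by
    push_cast; linarith [Nat.floor_le (hkf x), Nat.floor_le (hkg x)]
  have hwuv : ∀ x, w x ≤ u x + v x + 1 := fun x => Nat.lt_succ_iff.1 <| by
    refine (Nat.floor_lt (by linarith [hkf x, hkg x])).2 ?_
    push_cast; linarith [Nat.lt_floor_add_one (k * f x), Nat.lt_floor_add_one (k * g x)]
  have hwk : ∀ x, w x ≤ k := fun x =>
    Nat.floor_le_of_le (mul_le_of_le_one_right k.cast_nonneg (hfg x))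
  have hadd := layerSum_add (μ := μ) fun x => (huvw x).trans (hwk x)
  have lower : μ.layerSum k (fun x => u x + v x) ≤ μ.layerSum k w := layerSum_mono huvw
  have upper : μ.layerSum k w ≤ μ.layerSum k (fun x => u x + v x) + 1 :=
    calc μ.layerSum k w
        ≤ μ.layerSum k (fun x => u x + v x + Set.univ.indicator 1 x) :=
          layerSum_mono fun x => by simpa using hwuv x
      _ = μ.layerSum k (fun x => u x + v x) + μ.m (Set.univ ∩ {x | u x + v x < k}) :=
          layerSum_add_indicator _
      _ ≤ μ.layerSum k (fun x => u x + v x) + 1 := by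
          linarith [μ.m_le_one (Set.univ ∩ {x | u x + v x < k})]
  simp only [discreteIntegral, ← add_div, ← sub_div]
  exact ⟨div_nonneg (by linarith) k.cast_nonneg,
    div_le_div_of_nonneg_right (by linarith) k.cast_nonneg⟩

end InvMean

theorem nonempty_invMean_of_tendsto {Λ X ι : Type*} {act : Λ → X → X} (𝒰 : Ultrafilter ι)
    (m : ι → Set X → ℝ) (hm : ∀ i A, m i A ∈ Set.Icc 0 1)
    (htotal : Tendsto (fun i => m i Set.univ) 𝒰 (𝓝 1))
    (hadd : ∀ A B, Disjoint A B → Tendsto (fun i => m i (A ∪ B) - (m i A + m i B)) 𝒰 (𝓝 0))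
    (hinv : ∀ i g A, m i (act g '' A) = m i A) :
    Nonempty (InvMean act) := by
  have hlim : ∀ A, ∃ L ∈ Set.Icc (0 : ℝ) 1, Tendsto (fun i => m i A) 𝒰 (𝓝 L) := fun A =>
    isCompact_Icc.ultrafilter_le_nhds' (𝒰.map fun i => m i A)
      (Ultrafilter.mem_map.2 (univ_mem' fun i => hm i A))
  choose L hL01 hL using hlim
  exact ⟨{
    m := L
    nonneg := fun A => (hL01 A).1
    total := tendsto_nhds_unique (hL _) htotal
    additive := fun A B hAB =>
      sub_eq_zero.1 (tendsto_nhds_unique ((hL _).sub ((hL A).add (hL B))) (hadd A B hAB))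
    invariant := fun g A =>
      tendsto_nhds_unique (by simpa only [hinv] using hL (act g '' A)) (hL A) }⟩

section GroupAction

variable {Λ X Y : Type*} [Group Λ] [MulAction Λ X] [MulAction Λ Y]

lemma InvMean.m_preimage_smul (μ : InvMean (fun (g : Λ) (x : X) => g • x)) (g : Λ) (S : Set X) :
    μ.m ((g • ·) ⁻¹' S) = μ.m S := by
  rw [Set.preimage_smul]
  exact μ.invariant g⁻¹ S

def InvMean.map (μ : InvMean (fun (g : Λ) (x : X) => g • x)) (f : X →[Λ] Y) :
    InvMean (fun (g : Λ) (y : Y) => g • y) where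
  m S := μ.m (f ⁻¹' S)
  nonneg _ := μ.nonneg _
  total := μ.total
  additive _ _ h := μ.additive _ _ (h.preimage f)
  invariant g S := by
    simp only [Set.image_smul, Group.preimage_smul_set]
    exact μ.invariant g _

theorem nonempty_invMean_of_kernel (n : InvMean (fun (g : Λ) (y : Y) => g • y))
    (φ : Set X → Y → ℝ) (h0 : ∀ A y, 0 ≤ φ A y) (huniv : ∀ y, φ Set.univ y = 1)
    (hadd : ∀ A B, Disjoint A B → ∀ y, φ (A ∪ B) y = φ A y + φ B y)
    (hsmul : ∀ (g : Λ) A y, φ (g • A) (g • y) = φ A y) :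
    Nonempty (InvMean (fun (g : Λ) (x : X) => g • x)) := by
  have hle : ∀ A y, φ A y ≤ 1 := fun A y => by
    have := hadd A Aᶜ disjoint_compl_right y
    rw [Set.union_compl_self, huniv] at this
    linarith [h0 Aᶜ y]
  refine nonempty_invMean_of_tendsto (hyperfilter ℕ)
    (fun k A => n.discreteIntegral (k + 1) (φ A))
    (fun _ _ => ⟨InvMean.discreteIntegral_nonneg, InvMean.discreteIntegral_le_one⟩) ?_ ?_ ?_
  · refine tendsto_const_nhds.congr fun k => ?_
    rw [funext huniv, InvMean.discreteIntegral_one k.succ_ne_zero]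
  · intro A B hAB
    have hε := (tendsto_one_div_add_atTop_nhds_zero_nat (𝕜 := ℝ)).mono_left
      Nat.hyperfilter_le_atTop
    have hbounds := fun k : ℕ => InvMean.discreteIntegral_add_sub_mem_Icc (μ := n) (k := k + 1)
      (h0 A) (h0 B) fun y => hadd A B hAB y ▸ hle (A ∪ B) y
    rw [show φ (A ∪ B) = fun y => φ A y + φ B y from funext (hadd A B hAB)]
    exact squeeze_zero (fun k => (hbounds k).1) (fun k => by simpa using (hbounds k).2) hε
  · intro k g A
    have hφ : φ (g • A) = fun y => φ A (g⁻¹ • y) :=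
      funext fun y => by simpa using hsmul g A (g⁻¹ • y)
    simp only [Set.image_smul, hφ]
    exact InvMean.discreteIntegral_comp _ (n.m_preimage_smul g⁻¹)

end GroupAction

section FiniteSubsets

variable {Λ I : Type*} [Group Λ] [MulAction Λ I]

noncomputable def relDens (F : Finset I) (A : Set I) : ℝ :=
  ((F : Set I) ∩ A).ncard / F.card

lemma relDens_nonneg {F : Finset I} {A : Set I} : 0 ≤ relDens F A := by
  unfold relDens; positivity

lemma relDens_univ {F : Finset I} (hF : F.Nonempty) : relDens F Set.univ = 1 := by
  simp [relDens, hF.ne_empty]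

lemma relDens_union {F : Finset I} {A B : Set I} (h : Disjoint A B) :
    relDens F (A ∪ B) = relDens F A + relDens F B := by
  rw [relDens, Set.inter_union_distrib_left, Set.ncard_union_eq
    (h.mono Set.inter_subset_right Set.inter_subset_right)
    (F.finite_toSet.subset Set.inter_subset_left) (F.finite_toSet.subset Set.inter_subset_left)]
  push_cast
  rw [add_div, relDens, relDens]

variable [DecidableEq I]

lemma relDens_smul (g : Λ) (F : Finset I) (A : Set I) : relDens (g • F) (g • A) = relDens F A := by
  rw [relDens, Finset.coe_smul_finset, ← Set.smul_set_inter, Set.ncard_smul_set,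
    Finset.card_smul_finset, relDens]

instance : MulAction Λ {F : Finset I // F.Nonempty} where
  smul g F := ⟨g • F.1, F.2.smul_finset⟩
  one_smul F := Subtype.ext (one_smul Λ F.1)
  mul_smul g h F := Subtype.ext (mul_smul g h F.1)

def singletonHom : I →[Λ] {F : Finset I // F.Nonempty} where
  toFun i := ⟨{i}, Finset.singleton_nonempty i⟩
  map_smul' _ i := Subtype.ext (Finset.smul_finset_singleton i).symm

end FiniteSubsets

theorem invariant_mean_iff_invariant_mean_finite_subsets_general
    {Λ I : Type*} [Group Λ] [DecidableEq I] [MulAction Λ I] :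
    Nonempty (InvMean (fun (g : Λ) (i : I) => g • i)) ↔
    Nonempty (InvMean (fun (g : Λ) (F : {F : Finset I // F.Nonempty}) =>
      (⟨F.1.image (fun i => g • i), F.2.image _⟩ : {F : Finset I // F.Nonempty}))) := by
  constructor
  · rintro ⟨μ⟩
    exact ⟨μ.map singletonHom⟩
  · rintro ⟨n⟩
    exact nonempty_invMean_of_kernel n (fun A F => relDens F.1 A) (fun _ _ => relDens_nonneg)
      (fun F => relDens_univ F.2) (fun _ _ h _ => relDens_union h)
      (fun g A F => relDens_smul g F.1 A)

/-- For a countable group `Λ` acting on a countable set `I`, the action `Λ ↷ I` admits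
an invariant mean if and only if the induced action of `Λ` on the set `J` of nonempty
finite subsets of `I` admits an invariant mean. -/
theorem invariant_mean_iff_invariant_mean_finite_subsets
    {Λ I : Type*} [Group Λ] [Countable Λ] [Countable I] [DecidableEq I] [MulAction Λ I] :
    Nonempty (InvMean (fun (g : Λ) (i : I) => g • i)) ↔
    Nonempty (InvMean (fun (g : Λ) (F : {F : Finset I // F.Nonempty}) =>
      (⟨F.1.image (fun i => g • i), F.2.image _⟩ : {F : Finset I // F.Nonempty}))) :=
  invariant_mean_iff_invariant_mean_finite_subsets_general
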